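/- arXiv:2107.03454 — 2 statements merged into one kernel-verified Lean document; each statement's English description precedes it below -/
import Mathlib

section
/- Define δ_i = ∑_{n=i+1}^{∞} (1/λ_n) ∏_{j=i+1}^{n} (λ_j/μ_j) (assumed convergent for all i ≥ 0) and ω_i = ∑_{k=0}^{i-1} δ_k. Then ω_0 = 0 and ω satisfies ω_{i+1} = (1 + μ_i/λ_i)·ω_i − (μ_i/λ_i)·ω_{i-1} − 1/λ_i for all i ≥ 1. -/
theorem stmt_9 (lam mu : ℕ → ℝ)
    (hl : ∀ i ≥ 1, 0 < lam i) (hm : ∀ i ≥ 1, 0 < mu i)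
    (hconv : ∀ i : ℕ, Summable (fun m : ℕ =>
      (1 / lam (i + 1 + m)) * ∏ j ∈ Finset.Icc (i + 1) (i + 1 + m), lam j / mu j))
    (delta omega : ℕ → ℝ)
    (hdelta : ∀ i, delta i = ∑' m : ℕ,
      (1 / lam (i + 1 + m)) * ∏ j ∈ Finset.Icc (i + 1) (i + 1 + m), lam j / mu j)
    (homega : ∀ i, omega i = ∑ k ∈ Finset.range i, delta k) :
    omega 0 = 0 ∧
    ∀ i ≥ 1, omega (i + 1) =
      (1 + mu i / lam i) * omega i - mu i / lam i * omega (i - 1) - 1 / lam i := by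
  constructor
  · simp [homega 0]
  · intro i hi
    obtain ⟨n, rfl⟩ : ∃ n, i = n + 1 := ⟨i - 1, (Nat.succ_pred_eq_of_pos hi).symm⟩
    have hlpos := hl (n + 1) (Nat.le_add_left 1 n)
    have hmpos := hm (n + 1) (Nat.le_add_left 1 n)
    -- key: delta n = 1/mu(n+1) + (lam(n+1)/mu(n+1)) * delta (n+1)
    have key : delta n = 1 / mu (n + 1) + lam (n + 1) / mu (n + 1) * delta (n + 1) := by
      rw [hdelta n, Summable.tsum_eq_zero_add (hconv n)]
      have h0 : (1 / lam (n + 1 + 0)) *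
          ∏ j ∈ Finset.Icc (n + 1) (n + 1 + 0), lam j / mu j = 1 / mu (n + 1) := by
        simp
        field_simp
      rw [h0]
      congr 1
      have hterm : ∀ m : ℕ, (1 / lam (n + 1 + (m + 1))) *
          ∏ j ∈ Finset.Icc (n + 1) (n + 1 + (m + 1)), lam j / mu j =
          lam (n + 1) / mu (n + 1) *
          ((1 / lam (n + 2 + m)) * ∏ j ∈ Finset.Icc (n + 2) (n + 2 + m), lam j / mu j) := by
        intro m
        have hsplit : Finset.Icc (n + 1) (n + 1 + (m + 1)) =
            Finset.cons (n + 1) (Finset.Icc (n + 2) (n + 1 + (m + 1)))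
              (by simp [Finset.mem_Icc]) := by
          ext x
          simp only [Finset.mem_Icc, Finset.mem_cons]
          omega
        rw [hsplit, Finset.prod_cons]
        have : n + 1 + (m + 1) = n + 2 + m := by omega
        rw [this]
        ring
      rw [tsum_congr hterm, tsum_mul_left, hdelta (n + 1)]
    have ho1 : omega (n + 1 + 1) = omega (n + 1) + delta (n + 1) := by
      rw [homega, homega, Finset.sum_range_succ]
    have ho2 : omega (n + 1) = omega n + delta n := by
      rw [homega, homega, Finset.sum_range_succ]
    simp only [Nat.add_sub_cancel]
    rw [ho1, ho2, key]
    field_simp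
    ring
end

section
/- Let ω_i = ∑_{k=0}^{i-1} ∑_{n=k+1}^{∞} (1/λ_n) ∏_{j=k+1}^{n} (λ_j/μ_j), assuming all inner series converge. Then ω satisfies ω_i = (λ_i/(λ_i+μ_i))·ω_{i+1} + (μ_i/(λ_i+μ_i))·ω_{i-1} + 1/(λ_i+μ_i) for all i ≥ 1, with ω_0 = 0. -/
theorem stmt_18 (lam mu : ℕ → ℝ)
    (hl : ∀ i ≥ 1, 0 < lam i) (hm : ∀ i ≥ 1, 0 < mu i)
    (hconv : ∀ k : ℕ, Summable (fun m : ℕ =>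
      (1 / lam (k + 1 + m)) * ∏ j ∈ Finset.Icc (k + 1) (k + 1 + m), lam j / mu j))
    (omega : ℕ → ℝ)
    (homega : ∀ i, omega i = ∑ k ∈ Finset.range i, ∑' m : ℕ,
      (1 / lam (k + 1 + m)) * ∏ j ∈ Finset.Icc (k + 1) (k + 1 + m), lam j / mu j) :
    omega 0 = 0 ∧
    ∀ i ≥ 1, omega i = lam i / (lam i + mu i) * omega (i + 1)
      + mu i / (lam i + mu i) * omega (i - 1) + 1 / (lam i + mu i) := by
  set S : ℕ → ℝ := fun k => ∑' m : ℕ,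
    (1 / lam (k + 1 + m)) * ∏ j ∈ Finset.Icc (k + 1) (k + 1 + m), lam j / mu j with hS
  constructor
  · simp [homega 0]
  intro i hi
  obtain ⟨n, rfl⟩ : ∃ n, i = n + 1 := ⟨i - 1, by omega⟩
  have hlp := hl (n + 1) (by omega)
  have hmp := hm (n + 1) (by omega)
  -- key identity : mu (n+1) * S n = 1 + lam (n+1) * S (n+1)
  have key : mu (n + 1) * S n = 1 + lam (n + 1) * S (n + 1) := by
    have h1 : S n = 1 / mu (n + 1) + (lam (n + 1) / mu (n + 1)) * S (n + 1) := by
      rw [hS]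
      simp only
      rw [Summable.tsum_eq_zero_add (hconv n)]
      have h0 : (1 / lam (n + 1 + 0)) * ∏ j ∈ Finset.Icc (n + 1) (n + 1 + 0), lam j / mu j
          = 1 / mu (n + 1) := by
        simp
        field_simp
      rw [h0]
      congr 1
      have hshift : ∀ m : ℕ, (1 / lam (n + 1 + (m + 1))) *
          ∏ j ∈ Finset.Icc (n + 1) (n + 1 + (m + 1)), lam j / mu j
          = (lam (n + 1) / mu (n + 1)) *
            ((1 / lam (n + 1 + 1 + m)) * ∏ j ∈ Finset.Icc (n + 1 + 1) (n + 1 + 1 + m), lam j / mu j) := by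
        intro m
        have hmem : (n + 1) ∉ Finset.Icc (n + 2) (n + 2 + m) := by
          simp
        have hins : Finset.Icc (n + 1) (n + 1 + (m + 1))
            = insert (n + 1) (Finset.Icc (n + 2) (n + 2 + m)) := by
          rw [show n + 1 + (m + 1) = n + 2 + m by omega,
            show Finset.Icc (n + 2) (n + 2 + m) = Finset.Ioc (n + 1) (n + 2 + m) by
              rw [← Finset.Icc_add_one_left_eq_Ioc]; rfl,
            Finset.Ioc_insert_left (by omega)]
        rw [hins, Finset.prod_insert hmem]
        rw [show n + 1 + (m + 1) = n + 1 + 1 + m by omega]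
        ring
      calc (∑' m : ℕ, (1 / lam (n + 1 + (m + 1))) *
            ∏ j ∈ Finset.Icc (n + 1) (n + 1 + (m + 1)), lam j / mu j)
          = ∑' m : ℕ, (lam (n + 1) / mu (n + 1)) *
            ((1 / lam (n + 1 + 1 + m)) * ∏ j ∈ Finset.Icc (n + 1 + 1) (n + 1 + 1 + m), lam j / mu j) := by
            exact tsum_congr hshift
        _ = (lam (n + 1) / mu (n + 1)) * ∑' m : ℕ,
            ((1 / lam (n + 1 + 1 + m)) * ∏ j ∈ Finset.Icc (n + 1 + 1) (n + 1 + 1 + m), lam j / mu j) :=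
            tsum_mul_left
    rw [h1]
    field_simp
  have h2 : omega (n + 1) = omega n + S n := by
    rw [homega (n + 1), homega n, Finset.sum_range_succ, hS]
  have h3 : omega (n + 1 + 1) = omega (n + 1) + S (n + 1) := by
    rw [homega (n + 1 + 1), homega (n + 1), Finset.sum_range_succ, hS]
  have hsum : lam (n + 1) + mu (n + 1) ≠ 0 := by positivity
  simp only [Nat.add_sub_cancel]
  rw [h3, h2]
  field_simp
  linear_combination key
end
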